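/- Fix inputs x_1,…,x_{t-1}, observations y ∈ ℝ^{t-1}, σ > 0, and two kernels k_θ̂, k_θ bounded by 1 with sup-distance d(θ̂,θ). Define μ(x; θ) = k_θ(x)ᵀ (K_θ + σ²I)⁻¹ y, where k_θ(x) is the cross-covariance vector and K_θ the Gram matrix. Then |μ(x; θ̂) − μ(x; θ)| ≤ ‖y‖₂ · (√(t−1)/σ² + √(t−1)(t−1)/σ⁴) · d(θ̂, θ) for all x. -/

import Mathlib

/-!
Write `A = K + σ²I` and `A' = K' + σ²I`. The difference of the two means splits as
`(k'(x) - k(x)) ⬝ A'⁻¹y + k(x) ⬝ A'⁻¹(A - A')A⁻¹y`. Since `K` and `K'` are positive semidefinite,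
`σ²‖w‖² ≤ w ⬝ Aw ≤ ‖w‖‖Aw‖`, so both resolvents shrink Euclidean norms by at least `σ²`; entrywise
bounds by `d` give `‖k'(x) - k(x)‖ ≤ √m d` and `‖(A - A')w‖ ≤ m d ‖w‖`, and Cauchy–Schwarz
bounds the two dot products.
-/

open Matrix Finset

lemma Matrix.PosSemidef.posDef_add_smul_one {n : Type*} [Fintype n] [DecidableEq n]
    {K : Matrix n n ℝ} (hK : K.PosSemidef) {c : ℝ} (hc : 0 < c) :
    (K + c • (1 : Matrix n n ℝ)).PosDef :=
  PosDef.posSemidef_add hK (PosDef.one.smul hc)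

section EuclideanNorm

variable {ι κ : Type*} [Fintype ι] [Fintype κ]

noncomputable def euclNorm (v : ι → ℝ) : ℝ := √(∑ i, v i ^ 2)

lemma euclNorm_nonneg (v : ι → ℝ) : 0 ≤ euclNorm v := Real.sqrt_nonneg _

lemma euclNorm_sq (v : ι → ℝ) : euclNorm v ^ 2 = v ⬝ᵥ v := by
  rw [euclNorm, Real.sq_sqrt (by positivity)]
  simp only [dotProduct, sq]

lemma abs_dotProduct_le_euclNorm_mul (u v : ι → ℝ) : |u ⬝ᵥ v| ≤ euclNorm u * euclNorm v := by
  rw [euclNorm, euclNorm, ← Real.sqrt_mul (by positivity)]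
  exact Real.abs_le_sqrt (sum_mul_sq_le_sq_mul_sq _ _ _)

lemma euclNorm_le_of_abs_le {v : ι → ℝ} {c : ℝ} (hc : 0 ≤ c) (hv : ∀ i, |v i| ≤ c) :
    euclNorm v ≤ √(Fintype.card ι) * c := by
  have hsum : ∑ i, v i ^ 2 ≤ Fintype.card ι * c ^ 2 := by
    calc ∑ i, v i ^ 2 ≤ ∑ _i : ι, c ^ 2 :=
          sum_le_sum fun i _ => sq_abs (v i) ▸ pow_le_pow_left₀ (abs_nonneg _) (hv i) 2
      _ = Fintype.card ι * c ^ 2 := by simp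
  calc euclNorm v ≤ √(Fintype.card ι * c ^ 2) := Real.sqrt_le_sqrt hsum
    _ = √(Fintype.card ι) * c := by rw [Real.sqrt_mul (Nat.cast_nonneg _), Real.sqrt_sq hc]

lemma euclNorm_mulVec_le_of_abs_le {B : Matrix ι κ ℝ} {c : ℝ} (hc : 0 ≤ c)
    (hB : ∀ i j, |B i j| ≤ c) (w : κ → ℝ) :
    euclNorm (B *ᵥ w) ≤ √(Fintype.card ι) * (√(Fintype.card κ) * c * euclNorm w) := by
  refine euclNorm_le_of_abs_le
    (mul_nonneg (mul_nonneg (Real.sqrt_nonneg _) hc) (euclNorm_nonneg w)) fun i => ?_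
  calc |(B *ᵥ w) i| ≤ euclNorm (B i) * euclNorm w := abs_dotProduct_le_euclNorm_mul _ _
    _ ≤ √(Fintype.card κ) * c * euclNorm w :=
        mul_le_mul_of_nonneg_right (euclNorm_le_of_abs_le hc (hB i)) (euclNorm_nonneg w)

section Invertible

variable [DecidableEq ι]

lemma Matrix.PosSemidef.euclNorm_inv_add_smul_one_mulVec_le {K : Matrix ι ι ℝ}
    (hK : K.PosSemidef) {c : ℝ} (hc : 0 < c) (v : ι → ℝ) :
    euclNorm ((K + c • (1 : Matrix ι ι ℝ))⁻¹ *ᵥ v) ≤ euclNorm v / c := by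
  set w := (K + c • (1 : Matrix ι ι ℝ))⁻¹ *ᵥ v
  have hw : (K + c • (1 : Matrix ι ι ℝ)) *ᵥ w = v := by
    rw [mulVec_mulVec, mul_nonsing_inv _
      ((isUnit_iff_isUnit_det _).mp (hK.posDef_add_smul_one hc).isUnit), one_mulVec]
  have hquad : c * euclNorm w ^ 2 ≤ euclNorm w * euclNorm v := by
    have hKw : 0 ≤ w ⬝ᵥ K *ᵥ w := by simpa using hK.dotProduct_mulVec_nonneg w
    calc c * euclNorm w ^ 2 ≤ w ⬝ᵥ K *ᵥ w + c * (w ⬝ᵥ w) := by rw [euclNorm_sq]; linarith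
      _ = w ⬝ᵥ v := by
          rw [← hw, add_mulVec, smul_mulVec, one_mulVec, dotProduct_add, dotProduct_smul,
            smul_eq_mul]
      _ ≤ euclNorm w * euclNorm v := (le_abs_self _).trans (abs_dotProduct_le_euclNorm_mul _ _)
  rw [le_div_iff₀ hc]
  rcases (euclNorm_nonneg w).eq_or_lt with hw0 | hw0
  · rw [← hw0, zero_mul]
    exact euclNorm_nonneg v
  · nlinarith

lemma dotProduct_inv_mulVec_sub {A A' : Matrix ι ι ℝ} (hA : IsUnit A) (hA' : IsUnit A')
    (a a' y : ι → ℝ) :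
    a' ⬝ᵥ A'⁻¹ *ᵥ y - a ⬝ᵥ A⁻¹ *ᵥ y =
      (a' - a) ⬝ᵥ A'⁻¹ *ᵥ y + a ⬝ᵥ A'⁻¹ *ᵥ (A - A') *ᵥ A⁻¹ *ᵥ y := by
  have hdiff : A'⁻¹ *ᵥ y - A⁻¹ *ᵥ y = A'⁻¹ *ᵥ (A - A') *ᵥ A⁻¹ *ᵥ y := by
    rw [← sub_mulVec, inv_sub_inv (iff_of_true hA' hA), mulVec_mulVec, mulVec_mulVec]
  rw [sub_dotProduct, ← hdiff, dotProduct_sub]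
  ring

theorem abs_dotProduct_inv_add_smul_one_mulVec_sub_le {K K' : Matrix ι ι ℝ} (hK : K.PosSemidef)
    (hK' : K'.PosSemidef) {c d : ℝ} (hc : 0 < c) (hd : 0 ≤ d) (hKd : ∀ i j, |K' i j - K i j| ≤ d)
    {a a' : ι → ℝ} (ha : ∀ i, |a i| ≤ 1) (had : ∀ i, |a' i - a i| ≤ d) (y : ι → ℝ) :
    |a' ⬝ᵥ (K' + c • (1 : Matrix ι ι ℝ))⁻¹ *ᵥ y - a ⬝ᵥ (K + c • (1 : Matrix ι ι ℝ))⁻¹ *ᵥ y| ≤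
      euclNorm y * (√(Fintype.card ι) / c + √(Fintype.card ι) * Fintype.card ι / c ^ 2) * d := by
  set n : ℝ := (Fintype.card ι : ℝ)
  set A := K + c • (1 : Matrix ι ι ℝ)
  set A' := K' + c • (1 : Matrix ι ι ℝ)
  have hsqrt : √n * √n = n := Real.mul_self_sqrt (Nat.cast_nonneg _)
  have hAA' : ∀ i j, |(A - A') i j| ≤ d := fun i j => by
    simpa [A, A', abs_sub_comm] using hKd i j
  have hw : euclNorm (A⁻¹ *ᵥ y) ≤ euclNorm y / c := hK.euclNorm_inv_add_smul_one_mulVec_le hc y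
  have hw' : euclNorm (A'⁻¹ *ᵥ y) ≤ euclNorm y / c := hK'.euclNorm_inv_add_smul_one_mulVec_le hc y
  have hperturb : euclNorm (A'⁻¹ *ᵥ (A - A') *ᵥ A⁻¹ *ᵥ y) ≤ n * d * euclNorm y / c ^ 2 :=
    calc euclNorm (A'⁻¹ *ᵥ (A - A') *ᵥ A⁻¹ *ᵥ y) ≤ euclNorm ((A - A') *ᵥ A⁻¹ *ᵥ y) / c :=
          hK'.euclNorm_inv_add_smul_one_mulVec_le hc _
      _ ≤ √n * (√n * d * (euclNorm y / c)) / c := by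
          gcongr
          exact (euclNorm_mulVec_le_of_abs_le hd hAA' _).trans (by gcongr)
      _ = n * d * euclNorm y / c ^ 2 := by linear_combination (d * euclNorm y / c ^ 2) * hsqrt
  have hka : euclNorm a ≤ √n * 1 := euclNorm_le_of_abs_le zero_le_one ha
  have hka' : euclNorm (a' - a) ≤ √n * d := euclNorm_le_of_abs_le hd had
  rw [dotProduct_inv_mulVec_sub (hK.posDef_add_smul_one hc).isUnit
    (hK'.posDef_add_smul_one hc).isUnit]
  calc _ ≤ |(a' - a) ⬝ᵥ A'⁻¹ *ᵥ y| + |a ⬝ᵥ A'⁻¹ *ᵥ (A - A') *ᵥ A⁻¹ *ᵥ y| := abs_add_le _ _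
    _ ≤ euclNorm (a' - a) * euclNorm (A'⁻¹ *ᵥ y) +
          euclNorm a * euclNorm (A'⁻¹ *ᵥ (A - A') *ᵥ A⁻¹ *ᵥ y) :=
        add_le_add (abs_dotProduct_le_euclNorm_mul _ _) (abs_dotProduct_le_euclNorm_mul _ _)
    _ ≤ √n * d * (euclNorm y / c) + √n * 1 * (n * d * euclNorm y / c ^ 2) := by
        gcongr <;> exact euclNorm_nonneg _
    _ = euclNorm y * (√n / c + √n * n / c ^ 2) * d := by ring

end Invertible

end EuclideanNorm

theorem stmt_8_general {X : Type*} (m : ℕ) (xs : Fin m → X) (y : Fin m → ℝ)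
    (σ : ℝ) (hσ : 0 < σ)
    (k khat : X → X → ℝ)
    (hk : ∀ x x', |k x x'| ≤ 1)
    (d : ℝ) (hd : ∀ x x', |khat x x' - k x x'| ≤ d)
    (hK : (Matrix.of fun i j => k (xs i) (xs j)).PosSemidef)
    (hKhat : (Matrix.of fun i j => khat (xs i) (xs j)).PosSemidef)
    (μ μhat : X → ℝ)
    (hμ : ∀ x, μ x =
      (fun i => k (xs i) x) ⬝ᵥ
        ((Matrix.of (fun i j => k (xs i) (xs j)) + σ ^ 2 • (1 : Matrix (Fin m) (Fin m) ℝ))⁻¹).mulVec y)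
    (hμhat : ∀ x, μhat x =
      (fun i => khat (xs i) x) ⬝ᵥ
        ((Matrix.of (fun i j => khat (xs i) (xs j)) + σ ^ 2 • (1 : Matrix (Fin m) (Fin m) ℝ))⁻¹).mulVec y) :
    ∀ x, |μhat x - μ x| ≤
      Real.sqrt (∑ i, (y i) ^ 2) *
        (Real.sqrt m / σ ^ 2 + Real.sqrt m * m / σ ^ 4) * d := by
  intro x
  have hbound := abs_dotProduct_inv_add_smul_one_mulVec_sub_le hK hKhat (pow_pos hσ 2)
    ((abs_nonneg _).trans (hd x x)) (fun i j => hd (xs i) (xs j)) (fun i => hk (xs i) x)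
    (fun i => hd (xs i) x) y
  rw [hμhat, hμ]
  simpa only [Fintype.card_fin, ← pow_mul, Nat.reduceMul, euclNorm] using hbound

/-- Lipschitz continuity of the GP posterior mean in the kernel hyperparameter
(measured in the kernel sup-metric). -/
theorem stmt_8 {X : Type*} (m : ℕ) (xs : Fin m → X) (y : Fin m → ℝ)
    (σ : ℝ) (hσ : 0 < σ)
    (k khat : X → X → ℝ)
    (hk : ∀ x x', |k x x'| ≤ 1) (hkhat : ∀ x x', |khat x x'| ≤ 1)
    (d : ℝ) (hd : ∀ x x', |khat x x' - k x x'| ≤ d)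
    (hK : (Matrix.of fun i j => k (xs i) (xs j)).PosSemidef)
    (hKhat : (Matrix.of fun i j => khat (xs i) (xs j)).PosSemidef)
    (μ μhat : X → ℝ)
    (hμ : ∀ x, μ x =
      (fun i => k (xs i) x) ⬝ᵥ
        ((Matrix.of (fun i j => k (xs i) (xs j)) + σ ^ 2 • (1 : Matrix (Fin m) (Fin m) ℝ))⁻¹).mulVec y)
    (hμhat : ∀ x, μhat x =
      (fun i => khat (xs i) x) ⬝ᵥ
        ((Matrix.of (fun i j => khat (xs i) (xs j)) + σ ^ 2 • (1 : Matrix (Fin m) (Fin m) ℝ))⁻¹).mulVec y) :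
    ∀ x, |μhat x - μ x| ≤
      Real.sqrt (∑ i, (y i) ^ 2) *
        (Real.sqrt m / σ ^ 2 + Real.sqrt m * m / σ ^ 4) * d :=
  stmt_8_general m xs y σ hσ k khat hk d hd hK hKhat μ μhat hμ hμhat
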